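/- Let n ≥ 4 be an even integer. Then d(D_{2n} × C_2) = n + 1, i.e., the maximal length of a sequence over D_{2n} × C_2 with no nonempty product-one subsequence is n + 1. -/

import Mathlib

/-- A multiset `S` over a group is a *product-one sequence* if its terms can be
ordered so that their product is the identity. -/
def IsProductOne {G : Type*} [Group G] (S : Multiset G) : Prop :=
  ∃ l : List G, (l : Multiset G) = S ∧ l.prod = 1

/-- A multiset is *product-one free* if no nonempty sub-multiset is product-one. -/
def ProductOneFree {G : Type*} [Group G] (S : Multiset G) : Prop :=
  ∀ T : Multiset G, T ≤ S → T ≠ 0 → ¬ IsProductOne T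

/-- The small Davenport constant `d(G)`. -/
noncomputable def smallDavenport (G : Type*) [Group G] : ℕ :=
  sSup {k : ℕ | ∃ S : Multiset G, Multiset.card S = k ∧ ProductOneFree S}

/-!
The rotations `⟨r⟩ × C₂ ≅ C_n × C₂` form a commutative subgroup of index two of
`G = D_{2n} × C₂`, and every element outside it is an involution. Trading the reflections
`t₁, …, tₖ` of a product-one free sequence for the rotations `t₁t₂, …, tₖ₋₁tₖ` (a selection of
these telescopes to a product of some of the `tᵢ`) gives `d(G) ≤ d(C_n × C₂) + 1`.

For `n` even, `d(C_n × C₂) ≤ n` by the Olson–White bound: a product-one free sequence `S` over a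
finite abelian group that does not lie in a cyclic subgroup has at least `2|S| - 1` distinct
nonempty subproducts, none equal to `1`; so `2|S| - 1 ≤ 2n - 1`. Inside a cyclic subgroup, whose
order divides `n`, the at least `|S|` nonempty subproducts and `1` already give `|S| + 1 ≤ n`.

The sequence `(r, 1)^{n-1} (s, 1) (1, e)` is product-one free of length `n + 1`.
-/

open Multiset Subgroup
open scoped Finset List

section Group

variable {G : Type*} [Group G]

theorem ProductOneFree.mono {S S' : Multiset G} (hS' : ProductOneFree S') (h : S ≤ S') :
    ProductOneFree S :=
  fun T hT => hS' T (hT.trans h)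

theorem IsProductOne.map {H : Type*} [Group H] (f : G →* H) {T : Multiset G}
    (hT : IsProductOne T) : IsProductOne (T.map f) := by
  obtain ⟨l, rfl, hl⟩ := hT
  exact ⟨l.map f, rfl, by rw [← map_list_prod, hl, map_one]⟩

theorem ProductOneFree.of_map {H : Type*} [Group H] (f : G →* H) {S : Multiset G}
    (hS : ProductOneFree (S.map f)) : ProductOneFree S :=
  fun T hT hT0 hT1 => hS (T.map f) (map_le_map hT) (by simpa using hT0) (hT1.map f)

theorem productOneFree_replicate {g : G} {k : ℕ} (hk : k < orderOf g) :
    ProductOneFree (replicate k g) := by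
  rintro T hT hT0 ⟨l, rfl, hl⟩
  obtain ⟨m, hmk, hm⟩ := le_replicate_iff.1 hT
  have hlm : l = List.replicate m g := by
    rw [← coe_replicate, coe_eq_coe] at hm
    exact List.perm_replicate.1 hm
  rw [hlm, List.prod_replicate] at hl
  have hm0 : 0 < m := Nat.pos_of_ne_zero fun h => hT0 (by simp [hlm, h])
  exact absurd (orderOf_le_of_pow_eq_one hm0 hl) (by omega)

theorem ProductOneFree.cons {K : Subgroup G} {S : Multiset G} {x : G} (hS : ProductOneFree S)
    (hSK : ∀ y ∈ S, y ∈ K) (hx : x ∉ K) : ProductOneFree (x ::ₘ S) := by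
  rintro T hT hT0 ⟨l, rfl, hl⟩
  by_cases hxl : x ∈ l
  · obtain ⟨s, t, rfl⟩ := List.mem_iff_append.1 hxl
    have hst : ((s ++ t : List G) : Multiset G) ≤ S := by
      have hperm : ((s ++ x :: t : List G) : Multiset G) = x ::ₘ ↑(s ++ t) :=
        coe_eq_coe.2 List.perm_middle
      rwa [hperm, cons_le_cons_iff] at hT
    have hK : ∀ y ∈ s ++ t, y ∈ K := fun y hy => hSK y (mem_of_le hst (by simpa using hy))
    have hs := K.list_prod_mem fun y hy => hK y (List.mem_append_left t hy)
    have ht := K.list_prod_mem fun y hy => hK y (List.mem_append_right s hy)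
    rw [List.prod_append, List.prod_cons] at hl
    have : x = s.prod⁻¹ * t.prod⁻¹ :=
      calc x = s.prod⁻¹ * (s.prod * (x * t.prod)) * t.prod⁻¹ := by group
        _ = s.prod⁻¹ * t.prod⁻¹ := by rw [hl, mul_one]
    exact hx (this ▸ K.mul_mem (K.inv_mem hs) (K.inv_mem ht))
  · exact hS _ ((le_cons_of_notMem (by simpa using hxl)).1 hT) hT0 ⟨l, rfl, hl⟩

theorem ProductOneFree.card_le_of_forall_mem_range {A : Type*} [Group A] {N : ℕ}
    (f : A →* G) (hN : ∀ W : Multiset A, ProductOneFree W → card W ≤ N) {W : Multiset G}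
    (hWf : ∀ w ∈ W, w ∈ f.range) (hW : ProductOneFree W) : card W ≤ N := by
  have : CanLift G A f (· ∈ f.range) := ⟨fun _ => MonoidHom.mem_range.1⟩
  lift W to Multiset A using hWf
  simpa using hN W (hW.of_map f)

theorem smallDavenport_eq {N : ℕ}
    (hub : ∀ S : Multiset G, ProductOneFree S → card S ≤ N)
    (hlb : ∃ S : Multiset G, card S = N ∧ ProductOneFree S) : smallDavenport G = N := by
  have hbdd : BddAbove {k | ∃ S : Multiset G, card S = k ∧ ProductOneFree S} := by
    refine ⟨N, ?_⟩
    rintro k ⟨S, rfl, hS⟩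
    exact hub S hS
  refine le_antisymm (csSup_le ⟨N, hlb⟩ ?_) (le_csSup hbdd hlb)
  rintro k ⟨S, rfl, hS⟩
  exact hub S hS

end Group

section CommGroup

variable {A : Type*} [CommGroup A]

theorem productOneFree_iff_prod_ne_one {S : Multiset A} :
    ProductOneFree S ↔ ∀ T ≤ S, T ≠ 0 → T.prod ≠ 1 := by
  refine forall₃_congr fun T _ _ => not_congr ⟨?_, fun h => ⟨T.toList, coe_toList T, by simpa⟩⟩
  rintro ⟨l, rfl, hl⟩
  simpa using hl

variable [DecidableEq A]

/-- `Σ(S)` in the notation of zero-sum theory. -/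
def subprods (S : Multiset A) : Finset A :=
  ((S.powerset.filter (· ≠ 0)).map Multiset.prod).toFinset

variable {S S' : Multiset A} {a : A}

theorem mem_subprods : a ∈ subprods S ↔ ∃ T ≤ S, T ≠ 0 ∧ T.prod = a := by
  simp [subprods, and_assoc]

theorem subprods_cons (x : A) (S : Multiset A) :
    subprods (x ::ₘ S) = subprods S ∪ (insert 1 (subprods S)).image (x * ·) := by
  ext a
  simp only [subprods, powerset_cons, filter_add, map_add, toFinset_add, Finset.mem_union,
    mem_toFinset, Finset.mem_image, Finset.mem_insert, ne_eq, Multiset.mem_map, mem_filter,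
    mem_powerset, and_assoc, exists_exists_and_eq_and, cons_ne_zero, not_false_eq_true, prod_cons,
    true_and, exists_eq_or_imp, mul_one]
  refine or_congr_right ⟨?_, ?_⟩
  · rintro ⟨T, hT, rfl⟩
    rcases eq_or_ne T 0 with rfl | hT0
    · simp
    · exact Or.inr ⟨_, ⟨T, hT, hT0, rfl⟩, rfl⟩
  · rintro (rfl | ⟨_, ⟨T, hT, -, rfl⟩, rfl⟩)
    · exact ⟨0, zero_le _, by simp⟩
    · exact ⟨T, hT, rfl⟩

theorem subprods_mono (h : S ≤ S') : subprods S ⊆ subprods S' := fun a ha => by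
  obtain ⟨T, hT, hT0, rfl⟩ := mem_subprods.1 ha
  exact mem_subprods.2 ⟨T, hT.trans h, hT0, rfl⟩

theorem mem_subprods_of_mem (h : a ∈ S) : a ∈ subprods S :=
  mem_subprods.2 ⟨{a}, singleton_le.2 h, singleton_ne_zero a, prod_singleton a⟩

theorem insert_prod_subprods_erase_subset {x : A} (hx : x ∈ S) :
    insert S.prod (subprods (S.erase x)) ⊆ subprods S :=
  Finset.insert_subset (mem_subprods.2 ⟨S, le_rfl, (by rintro rfl; exact notMem_zero x hx), rfl⟩)
    (subprods_mono (erase_le x S))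

theorem Multiset.prod_tsub_mul_prod {T : Multiset A} (hT : T ≤ S) :
    (S - T).prod * T.prod = S.prod := by
  rw [← prod_add, tsub_add_cancel_of_le hT]

theorem prod_mul_inv_mem_subprods (ha : a ∈ subprods S) (hne : a ≠ S.prod) :
    S.prod * a⁻¹ ∈ subprods S := by
  obtain ⟨T, hT, -, rfl⟩ := mem_subprods.1 ha
  refine mem_subprods.2 ⟨S - T, tsub_le_self, fun h => hne ?_, ?_⟩
  · rw [le_antisymm hT (tsub_eq_zero_iff_le.1 h)]
  · rw [← prod_tsub_mul_prod hT, mul_inv_cancel_right]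

theorem ProductOneFree.one_notMem_subprods (hS : ProductOneFree S) : 1 ∉ subprods S := by
  intro h
  obtain ⟨T, hT, hT0, hT1⟩ := mem_subprods.1 h
  exact productOneFree_iff_prod_ne_one.1 hS T hT hT0 hT1

theorem ProductOneFree.prod_notMem_subprods_erase (hS : ProductOneFree S) {x : A} (hx : x ∈ S) :
    S.prod ∉ subprods (S.erase x) := by
  intro hmem
  obtain ⟨T, hT, -, hTS⟩ := mem_subprods.1 hmem
  have hTS' : T ≤ S := hT.trans (erase_le x S)
  refine productOneFree_iff_prod_ne_one.1 hS (S - T) tsub_le_self (fun h => ?_) ?_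
  · exact (hT.trans_lt (erase_lt.2 hx)).not_ge (tsub_eq_zero_iff_le.1 h)
  · simpa [hTS] using prod_tsub_mul_prod hTS'

theorem ProductOneFree.card_subprods_erase_add_one_le (hS : ProductOneFree S) {x : A} (hx : x ∈ S) :
    #(subprods (S.erase x)) + 1 ≤ #(subprods S) := by
  rw [← Finset.card_insert_of_notMem (hS.prod_notMem_subprods_erase hx)]
  exact Finset.card_le_card (insert_prod_subprods_erase_subset hx)

theorem ProductOneFree.card_le_card_subprods (hS : ProductOneFree S) :
    card S ≤ #(subprods S) := by
  induction S using Multiset.induction with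
  | empty => simp
  | cons x S ih =>
    have h := hS.card_subprods_erase_add_one_le (mem_cons_self x S)
    rw [erase_cons_head] at h
    have := ih (hS.mono (le_cons_self S x))
    rw [card_cons]
    omega

theorem card_subprods_cons_of_notMem_zpowers (hS : ProductOneFree S) {c x : A}
    (hSc : ∀ y ∈ S, y ∈ zpowers c) (hx : x ∉ zpowers c) :
    #(subprods (x ::ₘ S)) = 2 * #(subprods S) + 1 := by
  have hsub : ∀ a ∈ insert 1 (subprods S), a ∈ zpowers c := by
    intro a ha
    rcases Finset.mem_insert.1 ha with rfl | ha
    · exact one_mem _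
    · obtain ⟨T, hT, -, rfl⟩ := mem_subprods.1 ha
      exact multiset_prod_mem _ fun y hy => hSc y (mem_of_le hT hy)
  have hdisj : Disjoint (subprods S) ((insert 1 (subprods S)).image (x * ·)) := by
    refine Finset.disjoint_right.2 fun a ha ha' => ?_
    obtain ⟨b, hb, rfl⟩ := Finset.mem_image.1 ha
    exact hx (by simpa using div_mem (hsub _ (Finset.mem_insert_of_mem ha')) (hsub b hb))
  rw [subprods_cons, Finset.card_union_of_disjoint hdisj,
    Finset.card_image_of_injective _ (mul_right_injective x),
    Finset.card_insert_of_notMem hS.one_notMem_subprods]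
  ring

theorem pow_mul_of_forall_mul_of_ne {M : Type*} [Monoid M] {P : M → Prop} {g s y : M}
    (hP : ∀ b, P b → g * b ≠ s → P (g * b)) (hy : P y) (hs : ∀ m : ℕ, g ^ m * y ≠ s) :
    ∀ m : ℕ, P (g ^ m * y) := by
  intro m
  induction m with
  | zero => simpa using hy
  | succ m ih =>
    rw [pow_succ', mul_assoc]
    exact hP _ ih (by simpa [pow_succ', mul_assoc] using hs (m + 1))

theorem mem_zpowers_of_forall_mul_mem {G : Type*} [Group G] [Finite G] {B : Set G} {g s : G}
    (hB : 1 ∈ B) (hstep : ∀ b ∈ B, g * b ≠ s → g * b ∈ B) (hne : ∀ b ∈ B, g * b ≠ 1) :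
    s ∈ zpowers g := by
  by_contra hs
  have hpow := pow_mul_of_forall_mul_of_ne hstep hB
    (fun k hk => hs (by rw [← hk, mul_one]; exact pow_mem (mem_zpowers g) k)) (orderOf g - 1)
  refine hne _ hpow ?_
  rw [mul_one, ← pow_succ', Nat.sub_add_cancel (orderOf_pos g), pow_orderOf_eq_one]

/-- Multiplication by `g` maps `B = {1} ∪ Σ(S - g)` into `B ∪ {S.prod}`, never to `1`; so
`S.prod ∈ ⟨g⟩`, and `B` contains the coset `h⟨g⟩` of a term `h ∉ ⟨g⟩`. Then `h * S.prod ∈ Σ(S)`,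
hence also its complement `h⁻¹`, which lies neither in `Σ(S - h)` nor equals `S.prod`. -/
theorem ProductOneFree.mem_zpowers_of_subprods_eq_insert [Finite A] (hS : ProductOneFree S)
    (hsat : ∀ x ∈ S, subprods S = insert S.prod (subprods (S.erase x))) {g h : A} (hg : g ∈ S)
    (hh : h ∈ S) : h ∈ zpowers g := by
  by_contra hhg
  set s := S.prod
  set B := insert 1 (subprods (S.erase g))
  have hgB : ∀ b ∈ B, g * b ∈ subprods S := by
    rw [← cons_erase hg, subprods_cons]
    exact fun b hb => Finset.mem_union_right _ (Finset.mem_image_of_mem _ hb)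
  have hstep : ∀ b ∈ B, g * b ≠ s → g * b ∈ B := by
    intro b hb hbs
    have := hgB b hb
    rw [hsat g hg, Finset.mem_insert] at this
    exact Finset.mem_insert_of_mem (this.resolve_left hbs)
  have hs : s ∈ zpowers g := mem_zpowers_of_forall_mul_mem (Finset.mem_insert_self 1 _) hstep
    fun b hb h1 => hS.one_notMem_subprods (h1 ▸ hgB b hb)
  obtain ⟨m, hm : g ^ m = s⟩ := mem_powers_iff_mem_zpowers.2 hs
  have hhB : h ∈ B := Finset.mem_insert_of_mem
    (mem_subprods_of_mem ((mem_erase_of_ne (by rintro rfl; exact hhg (mem_zpowers h))).2 hh))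
  have hcoset : ∀ k : ℕ, g ^ k * h ≠ s := fun k hk => hhg <| by
    rw [show h = (g ^ k)⁻¹ * s by rw [← hk]; group]
    exact mul_mem (inv_mem (pow_mem (mem_zpowers g) k)) hs
  have hsh : s * h ∈ subprods S := by
    have hB := pow_mul_of_forall_mul_of_ne hstep hhB hcoset m
    have hne : s * h ≠ 1 := fun h1 => hhg (by rw [eq_inv_of_mul_eq_one_right h1]; exact inv_mem hs)
    rw [hm, Finset.mem_insert] at hB
    exact subprods_mono (erase_le g S) (hB.resolve_left hne)
  have hinv : h⁻¹ ∈ subprods S := by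
    have hne : s * h ≠ s := fun h1 => hhg (by rw [mul_eq_left.1 h1]; exact one_mem _)
    have := prod_mul_inv_mem_subprods hsh hne
    rwa [mul_inv_rev, mul_left_comm, mul_inv_cancel, mul_one] at this
  rw [hsat h hh, Finset.mem_insert] at hinv
  rcases hinv with h1 | h1
  · exact hhg (by rw [← inv_inv h, h1]; exact inv_mem hs)
  · obtain ⟨T, hT, -, hT1⟩ := mem_subprods.1 h1
    refine hS.one_notMem_subprods (mem_subprods.2 ⟨h ::ₘ T, ?_, cons_ne_zero, ?_⟩)
    · rw [← cons_erase hh]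
      exact cons_le_cons h hT
    · rw [prod_cons, hT1, mul_inv_cancel]

/-- Olson–White. -/
theorem ProductOneFree.two_mul_card_le_card_subprods_add_one [Finite A] (hS : ProductOneFree S)
    (hcyc : ∀ c : A, ∃ y ∈ S, y ∉ zpowers c) : 2 * card S ≤ #(subprods S) + 1 := by
  induction S using Multiset.strongInductionOn with
  | ih S IH =>
  by_cases hsplit : ∃ x ∈ S, ∃ c : A, ∀ y ∈ S.erase x, y ∈ zpowers c
  · obtain ⟨x, hx, c, hc⟩ := hsplit
    obtain ⟨S, rfl⟩ := exists_cons_of_mem hx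
    rw [erase_cons_head] at hc
    have hxc : x ∉ zpowers c := by
      intro hxc
      obtain ⟨y, hy, hyc⟩ := hcyc c
      rcases mem_cons.1 hy with rfl | hy
      · exact hyc hxc
      · exact hyc (hc y hy)
    have hS' := hS.mono (le_cons_self S x)
    rw [card_subprods_cons_of_notMem_zpowers hS' hc hxc, card_cons]
    have := hS'.card_le_card_subprods
    omega
  · by_contra hlt
    have hsat : ∀ x ∈ S, subprods S = insert S.prod (subprods (S.erase x)) := by
      intro x hx
      have hcyc' : ∀ c : A, ∃ y ∈ S.erase x, y ∉ zpowers c := by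
        push Not at hsplit
        exact hsplit x hx
      have hIH := IH _ (erase_lt.2 hx) (hS.mono (erase_le x S)) hcyc'
      have hcard := card_erase_add_one hx
      refine (Finset.eq_of_subset_of_card_le (insert_prod_subprods_erase_subset hx) ?_).symm
      rw [Finset.card_insert_of_notMem (hS.prod_notMem_subprods_erase hx)]
      omega
    obtain ⟨g, hg⟩ := exists_mem_of_ne_zero (show S ≠ 0 from fun h0 => by
      obtain ⟨y, hy, -⟩ := hcyc 1
      simp [h0] at hy)
    obtain ⟨h, hh, hhg⟩ := hcyc g
    exact hhg (hS.mem_zpowers_of_subprods_eq_insert hsat hg hh)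

theorem ProductOneFree.card_le_of_pow_eq_one [Fintype A] {n : ℕ} (hexp : ∀ a : A, a ^ n = 1)
    (hcard : Fintype.card A ≤ 2 * n) (hS : ProductOneFree S) : card S ≤ n := by
  have hS1 := hS.card_le_card_subprods
  by_cases hcyc : ∀ c : A, ∃ y ∈ S, y ∉ zpowers c
  · have hsub : subprods S ⊆ Finset.univ.erase 1 := fun a ha =>
      Finset.mem_erase.2 ⟨fun h => hS.one_notMem_subprods (h ▸ ha), Finset.mem_univ a⟩
    have := Finset.card_le_card hsub
    rw [Finset.card_erase_of_mem (Finset.mem_univ 1), Finset.card_univ] at this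
    have := hS.two_mul_card_le_card_subprods_add_one hcyc
    omega
  · push Not at hcyc
    obtain ⟨c, hc⟩ := hcyc
    have hsub : (↑(insert 1 (subprods S)) : Set A) ⊆ zpowers c := by
      intro a ha
      rcases Finset.mem_insert.1 ha with rfl | ha
      · exact one_mem _
      · obtain ⟨T, hT, -, rfl⟩ := mem_subprods.1 ha
        exact multiset_prod_mem _ fun y hy => hc y (mem_of_le hT hy)
    have := Set.ncard_le_ncard hsub
    rw [Set.ncard_coe_finset, Finset.card_insert_of_notMem hS.one_notMem_subprods,
      ← Nat.card_coe_set_eq, SetLike.coe_sort_coe, Nat.card_zpowers] at this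
    have hn : 0 < n := by linarith [Fintype.card_pos (α := A)]
    have := orderOf_le_of_pow_eq_one hn (hexp c)
    omega

end CommGroup

section IndexTwo

variable {G : Type*} [Group G]

/-- Consecutive products of involutions telescope: `(t₁t₂)(t₂t₃) = t₁t₃`. -/
theorem exists_sublist_prod_eq_of_sublist_zipWith :
    ∀ {L : List G}, (∀ t ∈ L, t * t = 1) → ∀ {c : List G},
      c <+ List.zipWith (· * ·) L L.tail → ∃ l, l <+ L ∧ l.prod = c.prod ∧ (c ≠ [] → l ≠ [])
  | [], _, _, hc => ⟨[], List.nil_sublist _, by simp_all, by simp_all⟩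
  | [_], _, _, hc => ⟨[], List.nil_sublist _, by simp_all, by simp_all⟩
  | t :: t' :: R, hL, _, hc => by
    rw [List.tail_cons, List.zipWith_cons_cons] at hc
    have hL' : ∀ u ∈ t' :: R, u * u = 1 := fun u hu => hL u (List.mem_cons_of_mem t hu)
    rcases List.sublist_cons_iff.1 hc with hc' | ⟨c, rfl, hc'⟩
    · obtain ⟨l, hl, hprod, hne⟩ := exists_sublist_prod_eq_of_sublist_zipWith hL' hc'
      exact ⟨l, hl.cons t, hprod, hne⟩
    · obtain ⟨l, hl, hprod, -⟩ := exists_sublist_prod_eq_of_sublist_zipWith hL' hc'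
      rcases List.sublist_cons_iff.1 hl with hl | ⟨r, rfl, hr⟩
      · exact ⟨t :: t' :: l, (hl.cons_cons t').cons_cons t, by simp [← hprod, mul_assoc], by simp⟩
      · refine ⟨t :: r, (hr.cons t').cons_cons t, ?_, by simp⟩
        rw [List.prod_cons, List.prod_cons, ← hprod, List.prod_cons, mul_assoc, ← mul_assoc t',
          hL' t' List.mem_cons_self, one_mul]

theorem ProductOneFree.append_zipWith_mul_tail (H : Subgroup G) [IsMulCommutative H]
    {R L : List G} (hR : ∀ r ∈ R, r ∈ H) (hL : ∀ t ∈ L, t * t = 1)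
    (hC : ∀ c ∈ List.zipWith (· * ·) L L.tail, c ∈ H)
    (hS : ProductOneFree (↑(R ++ L) : Multiset G)) :
    ProductOneFree (↑(R ++ List.zipWith (· * ·) L L.tail) : Multiset G) := by
  rintro T hT hT0 ⟨l, rfl, hl⟩
  obtain ⟨u, hul, hu⟩ := coe_le.1 hT
  obtain ⟨u₁, u₂, rfl, hu₁, hu₂⟩ := List.sublist_append_iff.1 hu
  obtain ⟨v, hv, hvprod, hvne⟩ := exists_sublist_prod_eq_of_sublist_zipWith hL hu₂
  refine hS ↑(u₁ ++ v) (coe_le.2 (hu₁.append hv).subperm) ?_ ⟨u₁ ++ v, rfl, ?_⟩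
  · rw [Ne, coe_eq_zero, List.append_eq_nil_iff, not_and_or]
    by_cases hu₂0 : u₂ = []
    · refine Or.inl fun hu₁0 => hT0 ?_
      simpa [hu₁0, hu₂0] using hul
    · exact Or.inr (hvne hu₂0)
  · have hmem : ∀ a ∈ u₁ ++ u₂, a ∈ H := fun a ha =>
      (List.mem_append.1 ((hu₁.append hu₂).subset ha)).elim (hR a) (hC a)
    have hcomm : (u₁ ++ u₂).Pairwise Commute := List.pairwise_of_forall_mem_list
      fun a ha b hb => setLike_mul_comm (hmem a ha) (hmem b hb)
    rw [List.prod_append, hvprod, ← List.prod_append, hul.prod_eq' hcomm, hl]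

/-- The terms `t₁, …, tₖ` of `S` outside `H` are traded for `t₁t₂, …, tₖ₋₁tₖ ∈ H`. -/
theorem ProductOneFree.card_le_add_one (H : Subgroup G) [IsMulCommutative H]
    (hinv : ∀ g ∉ H, g * g = 1) (hmul : ∀ g g', g ∉ H → g' ∉ H → g * g' ∈ H) {N : ℕ}
    (hN : ∀ W : Multiset G, (∀ w ∈ W, w ∈ H) → ProductOneFree W → card W ≤ N)
    {S : Multiset G} (hS : ProductOneFree S) : card S ≤ N + 1 := by
  classical
  set R := (S.filter (· ∈ H)).toList
  set L := (S.filter (· ∉ H)).toList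
  have hRL : (↑(R ++ L) : Multiset G) = S := by
    rw [← coe_add, coe_toList, coe_toList, filter_add_not]
  have hR : ∀ r ∈ R, r ∈ H := fun r hr => (mem_filter.1 (mem_toList.1 hr)).2
  have hL : ∀ t ∈ L, t ∉ H := fun t ht => (mem_filter.1 (mem_toList.1 ht)).2
  have hC : ∀ c ∈ List.zipWith (· * ·) L L.tail, c ∈ H := by
    intro c hc
    rw [← List.map_uncurry_zip_eq_zipWith, List.mem_map] at hc
    obtain ⟨⟨a, b⟩, hab, rfl⟩ := hc
    obtain ⟨ha, hb⟩ := List.of_mem_zip hab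
    exact hmul a b (hL a ha) (hL b (List.mem_of_mem_tail hb))
  have hW := (hRL ▸ hS).append_zipWith_mul_tail H hR (fun t ht => hinv t (hL t ht)) hC
  have hcard := hN _ (fun w hw => (List.mem_append.1 (mem_coe.1 hw)).elim (hR w) (hC w)) hW
  have hS' := congrArg card hRL
  simp only [coe_card, List.length_append, List.length_zipWith, List.length_tail] at hcard hS'
  omega

end IndexTwo

theorem zmod_prod_zmod_two_pow_eq_one {n : ℕ} [NeZero n] (hn : Even n)
    (a : Multiplicative (ZMod n) × Multiplicative (ZMod 2)) : a ^ n = 1 := by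
  have h1 : a.1 ^ n = 1 := by simpa [ZMod.card] using pow_card_eq_one (x := a.1)
  have h2 : a.2 ^ 2 = 1 := by simpa [ZMod.card] using pow_card_eq_one (x := a.2)
  obtain ⟨k, rfl⟩ := hn.two_dvd
  exact Prod.ext h1 (by rw [Prod.pow_snd, pow_mul, h2, one_pow]; rfl)

namespace DihedralGroup

variable {n : ℕ}

def rotationHom : Multiplicative (ZMod n) →* DihedralGroup n where
  toFun i := r i.toAdd
  map_one' := rfl
  map_mul' _ _ := (r_mul_r _ _).symm

def rotationProdHom (n : ℕ) : Multiplicative (ZMod n) × Multiplicative (ZMod 2) →*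
    DihedralGroup n × Multiplicative (ZMod 2) :=
  rotationHom.prodMap (MonoidHom.id _)

theorem r_mem_range_rotationProdHom (i : ZMod n) (v : Multiplicative (ZMod 2)) :
    (r i, v) ∈ (rotationProdHom n).range :=
  ⟨(Multiplicative.ofAdd i, v), rfl⟩

theorem sr_notMem_range_rotationProdHom (i : ZMod n) (v : Multiplicative (ZMod 2)) :
    (sr i, v) ∉ (rotationProdHom n).range := by
  rintro ⟨⟨j, w⟩, h⟩
  simp [rotationProdHom, rotationHom] at h

theorem mul_self_eq_one_of_notMem_range_rotationProdHom
    {g : DihedralGroup n × Multiplicative (ZMod 2)} (hg : g ∉ (rotationProdHom n).range) :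
    g * g = 1 := by
  obtain ⟨i | i, v⟩ := g
  · exact absurd (r_mem_range_rotationProdHom i v) hg
  · exact Prod.ext (sr_mul_self i) ((by decide : ∀ w : Multiplicative (ZMod 2), w * w = 1) v)

theorem mul_mem_range_rotationProdHom_of_notMem {g g' : DihedralGroup n × Multiplicative (ZMod 2)}
    (hg : g ∉ (rotationProdHom n).range) (hg' : g' ∉ (rotationProdHom n).range) :
    g * g' ∈ (rotationProdHom n).range := by
  obtain ⟨i | i, v⟩ := g
  · exact absurd (r_mem_range_rotationProdHom i v) hg
  obtain ⟨j | j, w⟩ := g'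
  · exact absurd (r_mem_range_rotationProdHom j w) hg'
  exact r_mem_range_rotationProdHom (j - i) (v * w)

theorem card_le_of_productOneFree [NeZero n] (hn : Even n)
    {S : Multiset (DihedralGroup n × Multiplicative (ZMod 2))} (hS : ProductOneFree S) :
    Multiset.card S ≤ n + 1 := by
  refine hS.card_le_add_one (rotationProdHom n).range
    (fun _ => mul_self_eq_one_of_notMem_range_rotationProdHom)
    (fun _ _ => mul_mem_range_rotationProdHom_of_notMem) fun W hW hWfree => ?_
  refine hWfree.card_le_of_forall_mem_range (rotationProdHom n) (fun W' hW' => ?_) hW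
  exact hW'.card_le_of_pow_eq_one (zmod_prod_zmod_two_pow_eq_one hn)
    (by simp [ZMod.card, mul_comm])

theorem exists_productOneFree_card_eq [NeZero n] :
    ∃ S : Multiset (DihedralGroup n × Multiplicative (ZMod 2)),
      Multiset.card S = n + 1 ∧ ProductOneFree S := by
  let a : DihedralGroup n × Multiplicative (ZMod 2) := (r 1, 1)
  let b : DihedralGroup n × Multiplicative (ZMod 2) := (sr 0, 1)
  let c : DihedralGroup n × Multiplicative (ZMod 2) := (1, Multiplicative.ofAdd 1)
  have hn := NeZero.pos n
  refine ⟨c ::ₘ b ::ₘ replicate (n - 1) a, by simp; omega, ?_⟩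
  have ha : ProductOneFree (replicate (n - 1) a) :=
    productOneFree_replicate (by simp [a, Prod.orderOf_mk]; omega)
  have hab : ProductOneFree (b ::ₘ replicate (n - 1) a) :=
    ha.cons (fun y hy => eq_of_mem_replicate hy ▸ r_mem_range_rotationProdHom 1 1)
      (sr_notMem_range_rotationProdHom 0 1)
  have hc : c ∉ (MonoidHom.snd _ _).ker := by
    rw [MonoidHom.mem_ker]
    exact (by decide : Multiplicative.ofAdd (1 : ZMod 2) ≠ 1)
  refine hab.cons (fun y hy => ?_) hc
  rcases mem_cons.1 hy with rfl | hy
  · rfl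
  · rw [eq_of_mem_replicate hy]
    rfl

end DihedralGroup

theorem stmt_13 (n : ℕ) (hn : 4 ≤ n) (hev : Even n) :
    smallDavenport (DihedralGroup n × Multiplicative (ZMod 2)) = n + 1 := by
  have : NeZero n := ⟨by omega⟩
  exact smallDavenport_eq (fun _ => DihedralGroup.card_le_of_productOneFree hev)
    DihedralGroup.exists_productOneFree_card_eq
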